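/- Let n ≥ 2 and let v w : Fin n → ZMod 2 with v ≠ 0, w ≠ 0, and v ≠ w. Then there exist n-qubit stabilizer groups G₁, …, Gₙ, each of whose elements is of the form ±Z^u for some u, together with labels b₁, …, bₙ ∈ {0, 1}, such that for every ε ∈ {1,-1} and a u : Fin n → ZMod 2, the signed Hermitian Pauli Q := ε • P(a,u) satisfies trace ((1/2 : ℂ) • (1 + Q) * ρ_{G_i}) = b_i for all i = 1, …, n if and only if ε = 1, a = 0, and u ∈ {v, v + w}. In other words, the set of signed Paulis consistent with these n labeled stabilizer states is exactly {Z^v, Z^{v+w}} = Z^v · Span(Z^w). -/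

import Mathlib

open Matrix

noncomputable def chi (x : ZMod 2) : ℂ := (-1 : ℂ) ^ x.val

lemma zmod2_cases : ∀ x : ZMod 2, x = 0 ∨ x = 1 := by decide

lemma zmod2_val0 : (0 : ZMod 2).val = 0 := rfl
lemma zmod2_val1 : (1 : ZMod 2).val = 1 := rfl
lemma zmod2_oneone : (1 + 1 : ZMod 2) = 0 := rfl

lemma chi_zero : chi 0 = 1 := by simp [chi, zmod2_val0]

lemma chi_one : chi 1 = -1 := by simp [chi, zmod2_val1]

lemma chi_add (x y : ZMod 2) : chi (x + y) = chi x * chi y := by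
  rcases zmod2_cases x with rfl | rfl <;> rcases zmod2_cases y with rfl | rfl <;>
    simp [zmod2_oneone, chi_zero, chi_one]

lemma chi_inj : Function.Injective chi := by
  intro x y h
  rcases zmod2_cases x with rfl | rfl <;> rcases zmod2_cases y with rfl | rfl <;>
    simp [chi_zero, chi_one] at h ⊢ <;> norm_num at h

lemma chi_vals (x : ZMod 2) : chi x = 1 ∨ chi x = -1 := by
  rcases zmod2_cases x with rfl | rfl <;> simp [chi_zero, chi_one]

lemma chi_mul_self (x : ZMod 2) : chi x * chi x = 1 := by
  rcases chi_vals x with h | h <;> rw [h] <;> norm_num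

lemma chi_ne_zero (x : ZMod 2) : chi x ≠ 0 := by
  rcases chi_vals x with h | h <;> rw [h] <;> norm_num

lemma chi_sum {n : ℕ} (f : Fin n → ZMod 2) (s : Finset (Fin n)) :
    chi (∑ j ∈ s, f j) = ∏ j ∈ s, chi (f j) := by
  induction s using Finset.cons_induction with
  | empty => simp [chi_zero]
  | cons a s ha ih => rw [Finset.sum_cons, Finset.prod_cons, chi_add, ih]
open Matrix

/-- The unsigned `n`-qubit Pauli-type matrix `W(a,b)`. -/
noncomputable def W (n : ℕ) (a b : Fin n → ZMod 2) :
    Matrix (Fin n → ZMod 2) (Fin n → ZMod 2) ℂ :=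
  fun x y => if x = y + a then (-1 : ℂ) ^ (∑ j, b j * y j : ZMod 2).val else 0

/-- The Hermitian `n`-qubit Pauli `P(a,b) = I^{m(a,b)} • W(a,b)`. -/
noncomputable def PauliP (n : ℕ) (a b : Fin n → ZMod 2) :
    Matrix (Fin n → ZMod 2) (Fin n → ZMod 2) ℂ :=
  Complex.I ^ (Finset.univ.filter fun j => a j = 1 ∧ b j = 1).card • W n a b

/-- An `n`-qubit stabilizer group: a commutative subgroup of the units of the matrix
ring all of whose elements are signed Hermitian Paulis, avoiding `-1`, of order `2^n`. -/
def IsStabilizerGroup (n : ℕ)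
    (G : Subgroup (Matrix (Fin n → ZMod 2) (Fin n → ZMod 2) ℂ)ˣ) : Prop :=
  (∀ g ∈ G, ∀ h ∈ G, g * h = h * g) ∧
  (∀ g ∈ G, ∃ (ε : ℂ) (a b : Fin n → ZMod 2), (ε = 1 ∨ ε = -1) ∧
    (g : Matrix (Fin n → ZMod 2) (Fin n → ZMod 2) ℂ) = ε • PauliP n a b) ∧
  (-1 : (Matrix (Fin n → ZMod 2) (Fin n → ZMod 2) ℂ)ˣ) ∉ G ∧
  Nat.card G = 2 ^ n

/-- The stabilizer state `ρ_G = 2^{-n} ∑_{g ∈ G} g` of a stabilizer group `G`. -/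
noncomputable def stabState (n : ℕ)
    (G : Subgroup (Matrix (Fin n → ZMod 2) (Fin n → ZMod 2) ℂ)ˣ) :
    Matrix (Fin n → ZMod 2) (Fin n → ZMod 2) ℂ :=
  ((2 : ℂ) ^ n)⁻¹ • ∑ᶠ g ∈ (G : Set (Matrix (Fin n → ZMod 2) (Fin n → ZMod 2) ℂ)ˣ),
    (g : Matrix (Fin n → ZMod 2) (Fin n → ZMod 2) ℂ)
section Wlem

variable {n : ℕ}

lemma pi_add_self (u : Fin n → ZMod 2) : u + u = 0 := by
  funext j
  have : ∀ x : ZMod 2, x + x = 0 := by decide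
  exact this _

lemma W0_apply (u x y : Fin n → ZMod 2) :
    W n 0 u x y = if x = y then chi (∑ j, u j * y j) else 0 := by
  simp [W, chi]

lemma W0_mul (u u' : Fin n → ZMod 2) :
    W n 0 u * W n 0 u' = W n 0 (u + u') := by
  ext x y
  rw [Matrix.mul_apply]
  simp only [W0_apply, ite_mul, mul_ite, mul_zero, zero_mul]
  rw [Finset.sum_ite_eq' Finset.univ y]
  simp only [Finset.mem_univ, if_pos]
  by_cases h : x = y
  · subst h
    rw [if_pos rfl, if_pos rfl, ← chi_add, ← Finset.sum_add_distrib]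
    congr 1
    refine Finset.sum_congr rfl fun j _ => ?_
    simp [add_mul]
  · rw [if_neg h, if_neg h]

lemma W0_zero : W n 0 (0 : Fin n → ZMod 2) = 1 := by
  ext x y
  simp [W0_apply, Matrix.one_apply, chi_zero]

end Wlem
section Hom

variable {n : ℕ}

/-- The signed Z-Pauli `χ(c·u) Z^u` as a unit. -/
noncomputable def zUnit (c u : Fin n → ZMod 2) :
    (Matrix (Fin n → ZMod 2) (Fin n → ZMod 2) ℂ)ˣ where
  val := chi (∑ j, c j * u j) • W n 0 u
  inv := chi (∑ j, c j * u j) • W n 0 u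
  val_inv := by
    rw [smul_mul_assoc, mul_smul_comm, smul_smul, chi_mul_self, W0_mul,
      pi_add_self, W0_zero, one_smul]
  inv_val := by
    rw [smul_mul_assoc, mul_smul_comm, smul_smul, chi_mul_self, W0_mul,
      pi_add_self, W0_zero, one_smul]

lemma zUnit_val (c u : Fin n → ZMod 2) :
    (zUnit c u : Matrix (Fin n → ZMod 2) (Fin n → ZMod 2) ℂ)
      = chi (∑ j, c j * u j) • W n 0 u := rfl

noncomputable def zHom (n : ℕ) (c : Fin n → ZMod 2) :
    Multiplicative (Fin n → ZMod 2) →* (Matrix (Fin n → ZMod 2) (Fin n → ZMod 2) ℂ)ˣ where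
  toFun u := zUnit c u.toAdd
  map_one' := by
    apply Units.ext
    rw [zUnit_val]
    show chi (∑ j, c j * (0 : Fin n → ZMod 2) j) • W n 0 (0 : Fin n → ZMod 2) = 1
    simp [W0_zero, chi_zero]
  map_mul' := by
    intro x y
    apply Units.ext
    show chi (∑ j, c j * (x.toAdd + y.toAdd) j) • W n 0 (x.toAdd + y.toAdd)
      = (chi (∑ j, c j * x.toAdd j) • W n 0 x.toAdd) * (chi (∑ j, c j * y.toAdd j) • W n 0 y.toAdd)
    rw [smul_mul_assoc, mul_smul_comm, smul_smul, W0_mul, ← chi_add, ← Finset.sum_add_distrib]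
    congr 2
    refine Finset.sum_congr rfl fun j _ => ?_
    simp [mul_add]

lemma W0_diag (u y : Fin n → ZMod 2) : W n 0 u y y = chi (∑ j, u j * y j) := by
  rw [W0_apply, if_pos rfl]

lemma zHom_inj (c : Fin n → ZMod 2) : Function.Injective (zHom n c) := by
  intro x y h
  have hval : chi (∑ j, c j * x.toAdd j) • W n 0 x.toAdd
      = chi (∑ j, c j * y.toAdd j) • W n 0 y.toAdd :=
    congrArg (fun g : (Matrix (Fin n → ZMod 2) (Fin n → ZMod 2) ℂ)ˣ =>
      (g : Matrix (Fin n → ZMod 2) (Fin n → ZMod 2) ℂ)) h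
  have hsum0 : ∀ u : Fin n → ZMod 2, (∑ j, u j * (0 : Fin n → ZMod 2) j) = 0 := by
    intro u; simp
  have h00 := congrFun (congrFun hval 0) 0
  rw [Matrix.smul_apply, Matrix.smul_apply, W0_diag, W0_diag, hsum0, hsum0, chi_zero,
    smul_eq_mul, smul_eq_mul, mul_one, mul_one] at h00
  have : x.toAdd = y.toAdd := by
    funext j
    have he := congrFun (congrFun hval (Pi.single j 1)) (Pi.single j 1)
    rw [Matrix.smul_apply, Matrix.smul_apply, W0_diag, W0_diag, smul_eq_mul, smul_eq_mul,
      h00] at he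
    have he2 : chi (∑ i, x.toAdd i * (Pi.single j 1 : Fin n → ZMod 2) i) = chi (∑ i, y.toAdd i * (Pi.single j 1 : Fin n → ZMod 2) i) :=
      mul_left_cancel₀ (chi_ne_zero _) he
    have hs : ∀ u : Fin n → ZMod 2, (∑ i, u i * (Pi.single j 1 : Fin n → ZMod 2) i) = u j := by
      intro u
      rw [Finset.sum_eq_single j]
      · simp
      · intro i _ hij; simp [Pi.single_eq_of_ne hij]
      · simp
    rw [hs, hs] at he2
    exact chi_inj he2
  exact Multiplicative.toAdd.injective this
end Hom

section Stab

variable {n : ℕ}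

noncomputable def stabG (n : ℕ) (c : Fin n → ZMod 2) :
    Subgroup (Matrix (Fin n → ZMod 2) (Fin n → ZMod 2) ℂ)ˣ :=
  (zHom n c).range

lemma char_sum (n : ℕ) (d : Fin n → ZMod 2) :
    ∑ u : Fin n → ZMod 2, chi (∑ j, d j * u j) = if d = 0 then (2 : ℂ) ^ n else 0 := by
  have h1 : ∀ u : Fin n → ZMod 2, chi (∑ j, d j * u j) = ∏ j, chi (d j * u j) := fun u =>
    chi_sum _ _
  simp only [h1]
  rw [← Fintype.piFinset_univ, Finset.sum_prod_piFinset Finset.univ (fun j x => chi (d j * x))]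
  have h2 : ∀ j, (∑ x ∈ (Finset.univ : Finset (ZMod 2)), chi (d j * x))
      = chi 0 + chi (d j) := by
    intro j
    have : (Finset.univ : Finset (ZMod 2)) = {0, 1} := by decide
    rw [this, Finset.sum_insert (by decide), Finset.sum_singleton, mul_zero, mul_one]
  simp only [h2, chi_zero]
  by_cases hd : d = 0
  · subst hd
    simp only [Pi.zero_apply, chi_zero, if_pos rfl]
    norm_num
  · rw [if_neg hd]
    obtain ⟨j, hj⟩ := Function.ne_iff.mp hd
    refine Finset.prod_eq_zero (Finset.mem_univ j) ?_
    have : d j = 1 := (zmod2_cases (d j)).resolve_left hj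
    rw [this, chi_one]
    norm_num

lemma stabState_eq (c : Fin n → ZMod 2) :
    stabState n (stabG n c) =
      Matrix.of (fun x y => if x = y ∧ y = c then (1 : ℂ) else 0) := by
  unfold stabState stabG
  rw [MonoidHom.coe_range, finsum_mem_range (zHom_inj c), finsum_eq_sum_of_fintype]
  have hre : ∑ u : Multiplicative (Fin n → ZMod 2),
        ((zHom n c u : (Matrix (Fin n → ZMod 2) (Fin n → ZMod 2) ℂ)ˣ)
          : Matrix (Fin n → ZMod 2) (Fin n → ZMod 2) ℂ)
      = ∑ u : Fin n → ZMod 2, chi (∑ j, c j * u j) • W n 0 u := by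
    refine Fintype.sum_equiv Multiplicative.toAdd _ _ fun u => rfl
  rw [hre]
  ext x y
  rw [Matrix.smul_apply, Matrix.sum_apply]
  simp only [Matrix.smul_apply, W0_apply, smul_eq_mul, mul_ite, mul_zero]
  by_cases h : x = y
  · subst h
    simp only [if_pos rfl]
    have : ∀ u : Fin n → ZMod 2, chi (∑ j, c j * u j) * chi (∑ j, u j * x j)
        = chi (∑ j, (c + x) j * u j) := by
      intro u
      rw [← chi_add, ← Finset.sum_add_distrib]
      congr 1
      refine Finset.sum_congr rfl fun j _ => ?_
      simp only [Pi.add_apply]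
      ring
    simp only [if_true, this]
    rw [char_sum]
    by_cases hc : x = c
    · subst hc
      rw [if_pos (pi_add_self x), Matrix.of_apply, if_pos ⟨rfl, rfl⟩]
      exact inv_mul_cancel₀ (pow_ne_zero n two_ne_zero)
    · have hx : c + x ≠ 0 := by
        intro h0
        apply hc
        have h2 := congrArg (fun z => z + x) h0
        simp only [add_assoc, pi_add_self, add_zero, zero_add] at h2
        exact h2.symm
      rw [if_neg hx]
      simp [Matrix.of_apply, hc]
  · simp [h, Matrix.of_apply]

end Stab
section More

variable {n : ℕ}

lemma trace_mul_rho (M : Matrix (Fin n → ZMod 2) (Fin n → ZMod 2) ℂ) (c : Fin n → ZMod 2) :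
    (M * stabState n (stabG n c)).trace = M c c := by
  rw [stabState_eq, Matrix.trace]
  have hd : ∀ x, (M * Matrix.of (fun x y => if x = y ∧ y = c then (1:ℂ) else 0)).diag x
      = if x = c then M c c else 0 := by
    intro x
    rw [Matrix.diag_apply, Matrix.mul_apply]
    by_cases h : x = c
    · subst h
      rw [if_pos rfl, Finset.sum_eq_single x]
      · simp
      · intro z _ hz
        simp [Matrix.of_apply, hz]
      · simp
    · rw [if_neg h]
      apply Finset.sum_eq_zero
      intro z _
      simp [Matrix.of_apply, h]
  simp only [hd]
  rw [Finset.sum_ite_eq' Finset.univ c (fun _ => M c c)]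
  simp

lemma PauliP_zero (u : Fin n → ZMod 2) : PauliP n 0 u = W n 0 u := by
  unfold PauliP
  have h0 : ∀ j ∈ Finset.univ, ¬((0 : Fin n → ZMod 2) j = 1 ∧ u j = 1) := by
    intro j _ h
    exact absurd h.1 (by simp)
  rw [Finset.filter_false_of_mem h0, Finset.card_empty, pow_zero, one_smul]

lemma PauliP_diag (a u c : Fin n → ZMod 2) :
    PauliP n a u c c = if a = 0 then chi (∑ j, u j * c j) else 0 := by
  by_cases ha : a = 0
  · subst ha
    rw [if_pos rfl, PauliP_zero, W0_diag]
  · rw [if_neg ha]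
    unfold PauliP
    rw [Matrix.smul_apply]
    have : W n a u c c = 0 := by
      unfold W
      rw [if_neg]
      intro h
      exact ha (left_eq_add.mp h)
    rw [this, smul_zero]

lemma stab_isStab (c : Fin n → ZMod 2) : IsStabilizerGroup n (stabG n c) := by
  refine ⟨?_, ?_, ?_, ?_⟩
  · rintro g ⟨x, rfl⟩ h ⟨y, rfl⟩
    rw [← _root_.map_mul, ← _root_.map_mul, mul_comm]
  · rintro g ⟨x, rfl⟩
    exact ⟨chi (∑ j, c j * x.toAdd j), 0, x.toAdd, chi_vals _, by rw [PauliP_zero]; rfl⟩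
  · rintro ⟨x, hx⟩
    have hval : chi (∑ j, c j * x.toAdd j) • W n 0 x.toAdd
        = (-1 : Matrix (Fin n → ZMod 2) (Fin n → ZMod 2) ℂ) := by
      have h2 := congrArg Units.val hx
      rw [Units.val_neg, Units.val_one] at h2
      exact h2
    have hsum0 : ∀ u : Fin n → ZMod 2, (∑ j, u j * (0 : Fin n → ZMod 2) j) = 0 := by
      intro u; simp
    have h00 := congrFun (congrFun hval 0) 0
    rw [Matrix.smul_apply, W0_diag, hsum0, chi_zero, smul_eq_mul, mul_one,
      Matrix.neg_apply, Matrix.one_apply_eq] at h00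
    have hx0 : x.toAdd = 0 := by
      funext j
      have he := congrFun (congrFun hval (Pi.single j 1)) (Pi.single j 1)
      have hs : ∀ u : Fin n → ZMod 2, (∑ i, u i * (Pi.single j 1 : Fin n → ZMod 2) i) = u j := by
        intro u
        rw [Finset.sum_eq_single j]
        · simp
        · intro i _ hij; simp [Pi.single_eq_of_ne hij]
        · simp
      rw [Matrix.smul_apply, W0_diag, hs, smul_eq_mul, h00, Matrix.neg_apply,
        Matrix.one_apply_eq] at he
      have h1 : chi (x.toAdd j) = 1 := by
        have h2 : (-1 : ℂ) * chi (x.toAdd j) = (-1) * 1 := by rw [mul_one]; exact he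
        exact mul_left_cancel₀ (by norm_num) h2
      exact chi_inj (h1.trans chi_zero.symm)
    rw [hx0] at h00
    rw [hsum0 ] at h00
    rw [chi_zero] at h00
    norm_num at h00
  · have h1 := Nat.card_range_of_injective (zHom_inj c)
    rw [stabG, ← SetLike.coe_sort_coe, MonoidHom.coe_range, h1,
      Nat.card_congr (Multiplicative.toAdd (α := Fin n → ZMod 2)), Nat.card_eq_fintype_card]
    simp

lemma trace_expr (ε : ℂ) (a u c : Fin n → ZMod 2) :
    ((1/2 : ℂ) • (1 + ε • PauliP n a u) * stabState n (stabG n c)).trace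
      = (1 + ε * (if a = 0 then chi (∑ j, u j * c j) else 0)) / 2 := by
  rw [Matrix.smul_mul, Matrix.trace_smul, trace_mul_rho, Matrix.add_apply,
    Matrix.one_apply_eq, Matrix.smul_apply, PauliP_diag]
  simp only [smul_eq_mul]
  ring

end More
section Main

def cvec (n : ℕ) (k : Fin n) (w : Fin n → ZMod 2) : Fin n → Fin n → ZMod 2 :=
  fun i j => if i = k then 0 else (if j = i then 1 else 0) + (if j = k then w i else 0)

lemma cvec_k {n : ℕ} (k : Fin n) (w : Fin n → ZMod 2) : cvec n k w k = 0 :=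
  funext fun _ => if_pos rfl

lemma dot_cvec {n : ℕ} {k i : Fin n} (w z : Fin n → ZMod 2) (hik : i ≠ k) :
    ∑ j, z j * cvec n k w i j = z i + z k * w i := by
  unfold cvec
  simp only [if_neg hik, mul_add, Finset.sum_add_distrib, mul_ite, mul_one, mul_zero]
  rw [Finset.sum_ite_eq' Finset.univ i (fun j => z j),
    Finset.sum_ite_eq' Finset.univ k (fun j => z j * w i)]
  simp

lemma dot_zero {n : ℕ} (z : Fin n → ZMod 2) : ∑ j, z j * (0 : Fin n → ZMod 2) j = 0 := by simp

lemma zmod2_ne_iff : ∀ x y : ZMod 2, x ≠ y → x = y + 1 := by decide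
lemma zmod2_solve : ∀ p q r s : ZMod 2, p + (q + 1) * s = r + q * s → p = r + s := by decide
lemma zmod2_back : ∀ p q r : ZMod 2, (p + r) + ((q + 1) * r) = p + q * r := by decide

lemma half_eq_half {x y : ℂ} (h : (1 + x) / 2 = (1 + y) / 2) : x = y := by
  linear_combination 2 * h

end Main

theorem stmt_12 (n : ℕ) (hn : 2 ≤ n) (v w : Fin n → ZMod 2)
    (hv : v ≠ 0) (hw : w ≠ 0) (hvw : v ≠ w) :
    ∃ (G : Fin n → Subgroup (Matrix (Fin n → ZMod 2) (Fin n → ZMod 2) ℂ)ˣ)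
      (b : Fin n → ℂ),
      (∀ i, IsStabilizerGroup n (G i)) ∧
      (∀ i, ∀ g ∈ G i, ∃ (ε : ℂ) (u : Fin n → ZMod 2), (ε = 1 ∨ ε = -1) ∧
        (g : Matrix (Fin n → ZMod 2) (Fin n → ZMod 2) ℂ) = ε • W n 0 u) ∧
      (∀ i, b i = 0 ∨ b i = 1) ∧
      (∀ (ε : ℂ), (ε = 1 ∨ ε = -1) → ∀ (a u : Fin n → ZMod 2),
        ((∀ i, ((1 / 2 : ℂ) • (1 + ε • PauliP n a u) * stabState n (G i)).trace = b i) ↔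
          (ε = 1 ∧ a = 0 ∧ (u = v ∨ u = v + w)))) := by
  obtain ⟨k, hk⟩ := Function.ne_iff.mp hw
  have hwk : w k = 1 := (zmod2_cases (w k)).resolve_left hk
  refine ⟨fun i => stabG n (cvec n k w i),
    fun i => (1 + chi (∑ j, v j * cvec n k w i j)) / 2, ?_, ?_, ?_, ?_⟩
  · intro i; exact stab_isStab _
  · rintro i g ⟨x, rfl⟩
    exact ⟨chi (∑ j, cvec n k w i j * x.toAdd j), x.toAdd, chi_vals _, rfl⟩
  · intro i
    rcases chi_vals (∑ j, v j * cvec n k w i j) with h | h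
    · right
      show (1 + chi (∑ j, v j * cvec n k w i j)) / 2 = 1
      rw [h]; norm_num
    · left
      show (1 + chi (∑ j, v j * cvec n k w i j)) / 2 = 0
      rw [h]; norm_num
  · intro ε hε a u
    constructor
    · intro h
      have hEq : ∀ i, ε * (if a = 0 then chi (∑ j, u j * cvec n k w i j) else 0)
          = chi (∑ j, v j * cvec n k w i j) := by
        intro i
        have hi := h i
        rw [trace_expr] at hi
        exact half_eq_half hi
      have hEqk := hEq k
      rw [cvec_k, dot_zero, dot_zero, chi_zero] at hEqk
      have ha : a = 0 := by
        by_contra ha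
        rw [if_neg ha, mul_zero] at hEqk
        exact one_ne_zero hEqk.symm
      have hε1 : ε = 1 := by rwa [if_pos ha, mul_one] at hEqk
      refine ⟨hε1, ha, ?_⟩
      have hEq2 : ∀ i, i ≠ k → u i + u k * w i = v i + v k * w i := by
        intro i hik
        have hi := hEq i
        rw [if_pos ha, hε1, one_mul] at hi
        have := chi_inj hi
        rwa [dot_cvec w u hik, dot_cvec w v hik] at this
      by_cases hcase : u k = v k
      · left
        funext i
        by_cases hik : i = k
        · subst hik; exact hcase
        · have := hEq2 i hik
          rw [hcase] at this
          exact add_right_cancel this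
      · right
        have hk2 : u k = v k + 1 := zmod2_ne_iff _ _ hcase
        funext i
        by_cases hik : i = k
        · subst hik
          show u i = v i + w i
          rw [hk2, hwk]
        · have hi := hEq2 i hik
          rw [hk2] at hi
          exact zmod2_solve _ _ _ _ hi
    · rintro ⟨hε1, ha, hu⟩
      subst hε1; subst ha
      intro i
      rw [trace_expr, if_pos rfl, one_mul]
      suffices hsu : (∑ j, u j * cvec n k w i j) = ∑ j, v j * cvec n k w i j by rw [hsu]
      rcases hu with rfl | rfl
      · rfl
      · by_cases hik : i = k
        · subst hik; rw [cvec_k, dot_zero, dot_zero]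
        · rw [dot_cvec w _ hik, dot_cvec w v hik]
          show (v i + w i) + (v k + w k) * w i = v i + v k * w i
          rw [hwk]
          exact zmod2_back _ _ _
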